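/- Fix h ∈ ℝ and σ > 0. Then the function ξ ↦ 2 T( h , √(σ² − ξ²) / ξ ) is strictly decreasing on the interval (0, σ). Consequently, among candidate evaluation locations, the expected conditional error, the expected unconditional error and the expected variance of the accept/reject indicator are all minimized exactly by maximizing the variance-reduction quantity ξ². -/
import Mathlib


open MeasureTheory

/-- Owen's T function. -/
noncomputable def owenT (h a : ℝ) : ℝ :=
  (1 / (2 * Real.pi)) * ∫ x in (0:ℝ)..a, Real.exp (-h^2 * (1 + x^2) / 2) / (1 + x^2)

lemma owenT_cont (h : ℝ) :
    Continuous (fun x : ℝ => Real.exp (-h^2 * (1 + x^2) / 2) / (1 + x^2)) := by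
  apply Continuous.div (by continuity) (by continuity)
  intro x; positivity

lemma owenT_strictMono (h : ℝ) {a b : ℝ} (ha : 0 ≤ a) (hab : a < b) :
    owenT h a < owenT h b := by
  unfold owenT
  have hint : ∀ u v : ℝ, IntervalIntegrable
      (fun x : ℝ => Real.exp (-h^2 * (1 + x^2) / 2) / (1 + x^2)) volume u v :=
    fun u v => (owenT_cont h).intervalIntegrable u v
  have hsplit : (∫ x in (0:ℝ)..b, Real.exp (-h^2 * (1 + x^2) / 2) / (1 + x^2))
      = (∫ x in (0:ℝ)..a, Real.exp (-h^2 * (1 + x^2) / 2) / (1 + x^2))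
        + (∫ x in a..b, Real.exp (-h^2 * (1 + x^2) / 2) / (1 + x^2)) :=
    (intervalIntegral.integral_add_adjacent_intervals (hint 0 a) (hint a b)).symm
  have hpos : 0 < ∫ x in a..b, Real.exp (-h^2 * (1 + x^2) / 2) / (1 + x^2) := by
    apply intervalIntegral.intervalIntegral_pos_of_pos_on (hint a b) _ hab
    intro x _
    positivity
  have hc : 0 < 1 / (2 * Real.pi) := by positivity
  rw [hsplit]
  nlinarith

lemma ratio_lt {σ ξ₁ ξ₂ : ℝ} (h1 : ξ₁ ∈ Set.Ioo 0 σ) (h2 : ξ₂ ∈ Set.Ioo 0 σ)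
    (hlt : ξ₁ < ξ₂) :
    Real.sqrt (σ^2 - ξ₂^2) / ξ₂ < Real.sqrt (σ^2 - ξ₁^2) / ξ₁ := by
  obtain ⟨h10, h1σ⟩ := h1
  obtain ⟨h20, h2σ⟩ := h2
  have hnum : Real.sqrt (σ^2 - ξ₂^2) < Real.sqrt (σ^2 - ξ₁^2) := by
    apply Real.sqrt_lt_sqrt (by nlinarith)
    nlinarith
  calc Real.sqrt (σ^2 - ξ₂^2) / ξ₂ ≤ Real.sqrt (σ^2 - ξ₂^2) / ξ₁ := by
        apply div_le_div_of_nonneg_left (Real.sqrt_nonneg _) h10 hlt.le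
    _ < Real.sqrt (σ^2 - ξ₁^2) / ξ₁ := by
        apply div_lt_div_of_pos_right hnum h10

/-- For fixed `h` and `σ > 0`, the map `ξ ↦ 2 T(h, √(σ² − ξ²)/ξ)` is strictly
decreasing on `(0, σ)`; consequently the expected errors (all of this form)
are minimized exactly by maximizing `ξ²`. -/
theorem owenT_strictAnti_in_xi (h σ : ℝ) (hσ : 0 < σ) :
    StrictAntiOn (fun ξ => 2 * owenT h (Real.sqrt (σ^2 - ξ^2) / ξ)) (Set.Ioo 0 σ) ∧
    ∀ ξ₁ ∈ Set.Ioo (0:ℝ) σ, ∀ ξ₂ ∈ Set.Ioo (0:ℝ) σ,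
      (2 * owenT h (Real.sqrt (σ^2 - ξ₂^2) / ξ₂)
          < 2 * owenT h (Real.sqrt (σ^2 - ξ₁^2) / ξ₁)
        ↔ ξ₁^2 < ξ₂^2) := by
  have key : StrictAntiOn (fun ξ => 2 * owenT h (Real.sqrt (σ^2 - ξ^2) / ξ)) (Set.Ioo 0 σ) := by
    intro ξ₁ h1 ξ₂ h2 hlt
    have hr := ratio_lt h1 h2 hlt
    have h2nonneg : 0 ≤ Real.sqrt (σ^2 - ξ₂^2) / ξ₂ :=
      div_nonneg (Real.sqrt_nonneg _) h2.1.le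
    have hm := owenT_strictMono h h2nonneg hr
    simp only []
    linarith
  refine ⟨key, fun ξ₁ h1 ξ₂ h2 => ?_⟩
  have hsq : ξ₁^2 < ξ₂^2 ↔ ξ₁ < ξ₂ := by
    constructor <;> intro hx <;> nlinarith [h1.1, h2.1]
  rw [hsq]
  constructor
  · intro hx
    by_contra hc
    push_neg at hc
    rcases eq_or_lt_of_le hc with he | hl
    · rw [he] at hx; exact lt_irrefl _ hx
    · exact absurd hx (not_lt.2 (key h2 h1 hl).le)
  · exact fun hx => key h1 h2 hx
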